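/- Let m ≥ 2 and N ≥ 1, and let G = ((ℤ_m)³)^N = (ℤ_m)^{3N}. With S₁⁰ = H₁∖{0}, S₂⁰ = H₂∖{0}, S₃⁰ = H₃∖{0}, S₁¹ = H₂∖{0}, S₂¹ = H₃∖{0}, S₃¹ = H₁∖{0} (where H₁, H₂, H₃ are the coordinate subgroups of (ℤ_m)³), define for each binary string α ∈ {0,1}^N and i ∈ {1,2,3} the set Sᵢ^α = Sᵢ^{α₁} × ⋯ × Sᵢ^{α_N} ⊆ G. Then the 2^N triples (S₁^α, S₂^α, S₃^α), α ∈ {0,1}^N, satisfy the simultaneous triple product property in G, each triple satisfying the TPP for ⟨(m−1)^N, (m−1)^N, (m−1)^N⟩. -/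
import Mathlib


/-- The triple product property (additive notation). -/
def IsAddTPP {G : Type*} [AddGroup G] (S T U : Finset G) : Prop :=
  ∀ s₁ ∈ S, ∀ s₂ ∈ S, ∀ t₁ ∈ T, ∀ t₂ ∈ T, ∀ u₁ ∈ U, ∀ u₂ ∈ U,
    (s₁ - s₂) + (t₁ - t₂) + (u₁ - u₂) = 0 → s₁ = s₂ ∧ t₁ = t₂ ∧ u₁ = u₂

/-- The simultaneous triple product property (additive notation). -/
def IsAddSTPP {G : Type*} [AddGroup G] {ι : Type*} (S T U : ι → Finset G) : Prop :=
  (∀ i, IsAddTPP (S i) (T i) (U i)) ∧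
    ∀ i j k : ι, ∀ s ∈ S i, ∀ s' ∈ S j, ∀ t ∈ T j, ∀ t' ∈ T k, ∀ u ∈ U k, ∀ u' ∈ U i,
      (s - s') + (t - t') + (u - u') = 0 → i = j ∧ j = k

/-- `H₁ ∖ {0}`, `H₂ ∖ {0}`, `H₃ ∖ {0}`: nonzero elements of the coordinate subgroups
of `(ℤ_m)³`. -/
def coordAxis (m : ℕ) [NeZero m] : Fin 3 → Finset (ZMod m × ZMod m × ZMod m) :=
  ![Finset.univ.filter (fun g => g.1 ≠ 0 ∧ g.2.1 = 0 ∧ g.2.2 = 0),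
    Finset.univ.filter (fun g => g.1 = 0 ∧ g.2.1 ≠ 0 ∧ g.2.2 = 0),
    Finset.univ.filter (fun g => g.1 = 0 ∧ g.2.1 = 0 ∧ g.2.2 ≠ 0)]

/-- The CKSU base sets: `Sᵢ⁰ = Hᵢ∖{0}` and `Sᵢ¹ = H_{i+1}∖{0}`, indexed by `i : Fin 3`
and a bit `b` for the superscript. -/
def cksuSet (m : ℕ) [NeZero m] (i : Fin 3) (b : Bool) : Finset (ZMod m × ZMod m × ZMod m) :=
  if b then coordAxis m (i + 1) else coordAxis m i

/-- For a binary string `α ∈ {0,1}^N`, the set `Sᵢ^α = Sᵢ^{α₁} × ⋯ × Sᵢ^{α_N}`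
inside `G = ((ℤ_m)³)^N`. -/
def cksuPowSet (m N : ℕ) [NeZero m] (i : Fin 3) (α : Fin N → Bool) :
    Finset (Fin N → ZMod m × ZMod m × ZMod m) :=
  Finset.univ.filter (fun g => ∀ j : Fin N, g j ∈ cksuSet m i (α j))

lemma key (m : ℕ) [NeZero m] (a b d e f g : ZMod m × ZMod m × ZMod m) (bα bβ bγ : Bool)
    (ha : a ∈ cksuSet m 0 bα) (hb : b ∈ cksuSet m 0 bβ) (hd : d ∈ cksuSet m 1 bβ)
    (he : e ∈ cksuSet m 1 bγ) (hf : f ∈ cksuSet m 2 bγ) (hg : g ∈ cksuSet m 2 bα)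
    (hsum : (a - b) + (d - e) + (f - g) = 0) :
    bα = bβ ∧ bβ = bγ ∧ a = b ∧ d = e ∧ f = g := by
  rw [Prod.ext_iff, Prod.ext_iff] at hsum
  obtain ⟨h1, h2, h3⟩ := hsum
  simp only [Prod.fst_add, Prod.fst_sub, Prod.snd_add, Prod.snd_sub, Prod.fst_zero,
    Prod.snd_zero] at h1 h2 h3
  cases bα <;> cases bβ <;> cases bγ <;>
    simp only [cksuSet, coordAxis, if_true, if_false, Finset.mem_filter, Bool.false_eq_true,
      (show (0:Fin 3)+1 = 1 by decide), (show (1:Fin 3)+1 = 2 by decide),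
      (show (2:Fin 3)+1 = 0 by decide), Matrix.cons_val_zero, Matrix.cons_val_one,
      Matrix.head_cons, Matrix.cons_val_two, Matrix.tail_cons] at ha hb hd he hf hg <;>
    obtain ⟨ha1, ha2, ha3⟩ := ha <;> obtain ⟨hb1, hb2, hb3⟩ := hb <;>
    obtain ⟨hd1, hd2, hd3⟩ := hd <;> obtain ⟨he1, he2, he3⟩ := he <;>
    obtain ⟨hf1, hf2, hf3⟩ := hf <;> obtain ⟨hg1, hg2, hg3⟩ := hg <;>
    simp_all [Prod.ext_iff, sub_eq_zero]

lemma card_coordAxis (m : ℕ) [NeZero m] (i : Fin 3) : (coordAxis m i).card = m - 1 := by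
  have h : ∀ s : Finset (ZMod m × ZMod m × ZMod m),
      (∃ φ : ZMod m → ZMod m × ZMod m × ZMod m, Function.Injective φ ∧
        s = (Finset.univ.erase (0 : ZMod m)).image φ) → s.card = m - 1 := by
    rintro s ⟨φ, hφ, rfl⟩
    rw [Finset.card_image_of_injective _ hφ, Finset.card_erase_of_mem (Finset.mem_univ _),
      Finset.card_univ, ZMod.card]
  fin_cases i
  · refine h _ ⟨fun x => (x, 0, 0), fun x y hxy => by simpa [Prod.ext_iff] using hxy, ?_⟩
    ext ⟨x, y, z⟩
    simp [coordAxis, Prod.ext_iff]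
    aesop
  · refine h _ ⟨fun x => (0, x, 0), fun x y hxy => by simpa [Prod.ext_iff] using hxy, ?_⟩
    ext ⟨x, y, z⟩
    simp [coordAxis, Prod.ext_iff]
    aesop
  · refine h _ ⟨fun x => (0, 0, x), fun x y hxy => by simpa [Prod.ext_iff] using hxy, ?_⟩
    ext ⟨x, y, z⟩
    simp [coordAxis, Prod.ext_iff]
    aesop

lemma card_cksuPowSet (m N : ℕ) [NeZero m] (i : Fin 3) (α : Fin N → Bool) :
    (cksuPowSet m N i α).card = (m - 1) ^ N := by
  have : cksuPowSet m N i α = Fintype.piFinset (fun j => cksuSet m i (α j)) := by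
    ext g; simp [cksuPowSet, Fintype.mem_piFinset]
  rw [this, Fintype.card_piFinset]
  have : ∀ j, (cksuSet m i (α j)).card = m - 1 := by
    intro j; unfold cksuSet; split <;> exact card_coordAxis m _
  simp [this]


/-- In `G = ((ℤ_m)³)^N`, the `2^N` triples `(S₁^α, S₂^α, S₃^α)`,
`α ∈ {0,1}^N`, satisfy the simultaneous triple product property, each triple being a
TPP triple for `⟨(m-1)^N, (m-1)^N, (m-1)^N⟩`. -/
theorem statement19 (m N : ℕ) [NeZero m] (hm : 2 ≤ m) (hN : 1 ≤ N) :
    IsAddSTPP (fun α : Fin N → Bool => cksuPowSet m N 0 α)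
      (fun α : Fin N → Bool => cksuPowSet m N 1 α)
      (fun α : Fin N → Bool => cksuPowSet m N 2 α) ∧
    ∀ α : Fin N → Bool, (cksuPowSet m N 0 α).card = (m - 1) ^ N ∧
      (cksuPowSet m N 1 α).card = (m - 1) ^ N ∧ (cksuPowSet m N 2 α).card = (m - 1) ^ N := by
  have hmem : ∀ (i : Fin 3) (α : Fin N → Bool) (g : Fin N → ZMod m × ZMod m × ZMod m),
      g ∈ cksuPowSet m N i α → ∀ j, g j ∈ cksuSet m i (α j) := by
    intro i α g hg j
    exact (Finset.mem_filter.mp hg).2 j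
  refine ⟨⟨?_, ?_⟩, fun α => ⟨card_cksuPowSet m N 0 α, card_cksuPowSet m N 1 α,
    card_cksuPowSet m N 2 α⟩⟩
  · intro α s₁ hs₁ s₂ hs₂ t₁ ht₁ t₂ ht₂ u₁ hu₁ u₂ hu₂ hsum
    have hj : ∀ j, s₁ j = s₂ j ∧ t₁ j = t₂ j ∧ u₁ j = u₂ j := by
      intro j
      have := key m (s₁ j) (s₂ j) (t₁ j) (t₂ j) (u₁ j) (u₂ j) (α j) (α j) (α j)
        (hmem 0 α s₁ hs₁ j) (hmem 0 α s₂ hs₂ j) (hmem 1 α t₁ ht₁ j) (hmem 1 α t₂ ht₂ j)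
        (hmem 2 α u₁ hu₁ j) (hmem 2 α u₂ hu₂ j) (congrFun hsum j)
      exact ⟨this.2.2.1, this.2.2.2⟩
    exact ⟨funext fun j => (hj j).1, funext fun j => (hj j).2.1, funext fun j => (hj j).2.2⟩
  · intro α β γ s hs s' hs' t ht t' ht' u hu u' hu' hsum
    have hj : ∀ j, α j = β j ∧ β j = γ j := by
      intro j
      have := key m (s j) (s' j) (t j) (t' j) (u j) (u' j) (α j) (β j) (γ j)
        (hmem 0 α s hs j) (hmem 0 β s' hs' j) (hmem 1 β t ht j) (hmem 1 γ t' ht' j)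
        (hmem 2 γ u hu j) (hmem 2 α u' hu' j) (congrFun hsum j)
      exact ⟨this.1, this.2.1⟩
    exact ⟨funext fun j => (hj j).1, funext fun j => (hj j).2⟩
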